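/- arXiv:math/0307116 — 2 statements merged into one kernel-verified Lean document; each statement's English description precedes it below -/
import Mathlib

section
/- Assume the positivity condition: l_j − L_j(τ) > 0 for every τ ∈ ℝ^ℓ and every j. Then the Kähler potential K_λ is a strictly convex function on ℝ^ℓ. -/
open Real Finset

noncomputable section

/-- `K(t) = log(1 + e^{2t})`. -/
def Kfun (t : ℝ) : ℝ := Real.log (1 + Real.exp (2 * t))

/-- `𝒥(t) = e^{2t}/(1 + e^{2t})`. -/
def Jfun (t : ℝ) : ℝ := Real.exp (2 * t) / (1 + Real.exp (2 * t))

/-- The coordinate change `Φ(σ)_i = σ_i + (1/2)·Σ_{j>i} c_{ji} K(σ_j)`. -/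
def Phi {ℓ : ℕ} (c : Fin ℓ → Fin ℓ → ℤ) (σ : Fin ℓ → ℝ) : Fin ℓ → ℝ :=
  fun i => σ i + (1 / 2) * ∑ j ∈ Finset.univ.filter (fun j => i < j), (c j i : ℝ) * Kfun (σ j)

/-- The inverse of the coordinate change `Φ`. -/
def PhiInv {ℓ : ℕ} (c : Fin ℓ → Fin ℓ → ℤ) : (Fin ℓ → ℝ) → (Fin ℓ → ℝ) :=
  Function.invFun (Phi c)

/-- The Kähler potential `K_λ(τ) = Σ_i l_i K(τ̃_i)`, where `τ̃ = Φ⁻¹(τ)`. -/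
def Klam {ℓ : ℕ} (l : Fin ℓ → ℤ) (c : Fin ℓ → Fin ℓ → ℤ) (τ : Fin ℓ → ℝ) : ℝ :=
  ∑ i, (l i : ℝ) * Kfun (PhiInv c τ i)

/-- The action variables `J_j(τ) = (1/2)·∂K_λ/∂τ_j`. -/
def Jact {ℓ : ℕ} (l : Fin ℓ → ℤ) (c : Fin ℓ → Fin ℓ → ℤ) (j : Fin ℓ) (τ : Fin ℓ → ℝ) : ℝ :=
  (1 / 2) * fderiv ℝ (Klam l c) τ (Pi.single j 1)

/-- `L_j(τ) = Σ_{i<j} c_{ji} J_i(τ)`. -/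
def Lfun {ℓ : ℕ} (l : Fin ℓ → ℤ) (c : Fin ℓ → Fin ℓ → ℤ) (j : Fin ℓ) (τ : Fin ℓ → ℝ) : ℝ :=
  ∑ i ∈ Finset.univ.filter (fun i => i < j), (c j i : ℝ) * Jact l c i τ


/-!
Restrict `K_λ` to a line `τ(t) = x + t u` and put `σ(t) = Φ⁻¹(τ(t))`. Differentiating
`K_λ ∘ Φ = Σ l_i K(σ_i)` gives `J_j = 𝒥(σ_j) m_j` with `m_j = l_j - L_j`, and differentiating
`Φ ∘ σ = τ` gives `u = dΦ_σ(σ')`, which is unipotent triangular in `σ'`. In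
`(K_λ ∘ τ)'' = 2 Σ u_j J_j'`, transposing that triangle cancels all terms except
`2 Σ m_j 𝒥'(σ_j) σ_j'²`, which is positive since `m_j > 0`, `𝒥' > 0` and `σ' ≠ 0`.
-/

open scoped ContDiff

theorem Finset.sum_sum_filter_lt_comm {ι R : Type*} [Fintype ι] [LinearOrder ι]
    [AddCommMonoid R] (f : ι → ι → R) :
    ∑ i, ∑ j ∈ univ.filter (fun j => i < j), f i j
      = ∑ j, ∑ i ∈ univ.filter (fun i => i < j), f i j :=
  Finset.sum_comm' fun i j => by simp

theorem StrictConvexOn.of_forall_line {E : Type*} [AddCommGroup E] [Module ℝ E] {f : E → ℝ}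
    (hf : ∀ x u : E, u ≠ 0 → StrictConvexOn ℝ Set.univ fun t : ℝ => f (x + t • u)) :
    StrictConvexOn ℝ Set.univ f := by
  refine ⟨convex_univ, fun x _ y _ hxy a b ha hb hab => ?_⟩
  have hline := (hf x (y - x) (sub_ne_zero.mpr hxy.symm)).2 (Set.mem_univ 0) (Set.mem_univ 1)
    zero_ne_one ha hb hab
  have hpt : x + b • (y - x) = a • x + b • y := by
    rw [eq_sub_of_add_eq hab]; module
  simpa [hpt] using hline

theorem Jfun_pos (t : ℝ) : 0 < Jfun t := by unfold Jfun; positivity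

theorem one_sub_Jfun_pos (t : ℝ) : 0 < 1 - Jfun t := by
  rw [sub_pos, Jfun, div_lt_one (by positivity)]; linarith

theorem hasDerivAt_Kfun (t : ℝ) : HasDerivAt Kfun (2 * Jfun t) t := by
  have h : HasDerivAt Kfun _ t :=
    (((hasDerivAt_id' t).const_mul 2).exp.const_add 1).log (by positivity)
  convert h using 1
  unfold Jfun; field_simp

theorem hasDerivAt_Jfun (t : ℝ) : HasDerivAt Jfun (2 * Jfun t * (1 - Jfun t)) t := by
  have he := ((hasDerivAt_id' t).const_mul 2).exp
  have h : HasDerivAt Jfun _ t := he.div (he.const_add 1) (by positivity)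
  convert h using 1
  unfold Jfun; field_simp

theorem contDiff_Kfun : ContDiff ℝ ∞ Kfun :=
  (contDiff_const.add (contDiff_const.mul contDiff_id).exp).log fun t => by positivity

section

variable {ℓ : ℕ}

def backSubst (c : Fin ℓ → Fin ℓ → ℤ) (τ : Fin ℓ → ℝ) (i : Fin ℓ) : ℝ :=
  τ i - (1 / 2) * ∑ j ∈ (univ.filter (fun j => i < j)).attach,
    (c j.1 i : ℝ) * Kfun (backSubst c τ j.1)
termination_by ℓ - i.1
decreasing_by
  have := (mem_filter.mp j.2).2
  omega

theorem backSubst_eq (c : Fin ℓ → Fin ℓ → ℤ) (τ : Fin ℓ → ℝ) (i : Fin ℓ) :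
    backSubst c τ i = τ i - (1 / 2) * ∑ j ∈ univ.filter (fun j => i < j),
      (c j i : ℝ) * Kfun (backSubst c τ j) := by
  rw [backSubst, sum_attach _ fun j => (c j i : ℝ) * Kfun (backSubst c τ j)]

theorem Phi_backSubst (c : Fin ℓ → Fin ℓ → ℤ) (τ : Fin ℓ → ℝ) : Phi c (backSubst c τ) = τ := by
  funext i
  rw [Phi, backSubst_eq]
  ring

theorem backSubst_Phi (c : Fin ℓ → Fin ℓ → ℤ) (σ : Fin ℓ → ℝ) : backSubst c (Phi c σ) = σ := by
  funext i
  induction i using WellFoundedGT.induction with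
  | _ i ih =>
    rw [backSubst_eq, sum_congr rfl fun j hj => by rw [ih j (mem_filter.mp hj).2], Phi]
    ring

theorem PhiInv_eq_backSubst (c : Fin ℓ → Fin ℓ → ℤ) : PhiInv c = backSubst c :=
  funext fun τ => Function.LeftInverse.injective (backSubst_Phi c) <| by
    rw [PhiInv, Function.invFun_eq ⟨_, Phi_backSubst c τ⟩, Phi_backSubst]

theorem contDiff_backSubst (c : Fin ℓ → Fin ℓ → ℤ) : ContDiff ℝ ∞ (backSubst c) := by
  refine contDiff_pi.mpr fun i => ?_
  induction i using WellFoundedGT.induction with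
  | _ i ih =>
    rw [show (fun τ => backSubst c τ i) = _ from funext fun τ => backSubst_eq c τ i]
    exact (contDiff_apply ℝ ℝ i).sub <| contDiff_const.mul <| ContDiff.sum fun j hj =>
      contDiff_const.mul <| contDiff_Kfun.comp (ih j (mem_filter.mp hj).2)

theorem Klam_eq (l : Fin ℓ → ℤ) (c : Fin ℓ → Fin ℓ → ℤ) :
    Klam l c = fun τ => ∑ i, (l i : ℝ) * Kfun (backSubst c τ i) := by
  funext τ; rw [Klam, PhiInv_eq_backSubst]

theorem contDiff_Klam (l : Fin ℓ → ℤ) (c : Fin ℓ → Fin ℓ → ℤ) : ContDiff ℝ ∞ (Klam l c) := by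
  rw [Klam_eq]
  exact ContDiff.sum fun i _ => contDiff_const.mul <|
    contDiff_Kfun.comp ((contDiff_apply ℝ ℝ i).comp (contDiff_backSubst c))

def PhiDeriv (c : Fin ℓ → Fin ℓ → ℤ) (σ v : Fin ℓ → ℝ) : Fin ℓ → ℝ :=
  fun i => v i + ∑ j ∈ univ.filter (fun j => i < j), (c j i : ℝ) * Jfun (σ j) * v j

theorem HasDerivAt.Phi_comp (c : Fin ℓ → Fin ℓ → ℤ) {γ : ℝ → Fin ℓ → ℝ} {γ' : Fin ℓ → ℝ}
    {t : ℝ} (hγ : HasDerivAt γ γ' t) :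
    HasDerivAt (fun t => Phi c (γ t)) (PhiDeriv c (γ t) γ') t := by
  refine hasDerivAt_pi.mpr fun i => ?_
  have hγi (j : Fin ℓ) : HasDerivAt (fun t => γ t j) (γ' j) t := hasDerivAt_pi.mp hγ j
  have h := (hγi i).add <| (HasDerivAt.fun_sum (u := univ.filter (fun j => i < j)) fun j _ =>
    ((hasDerivAt_Kfun _).comp t (hγi j)).const_mul (c j i : ℝ)).const_mul (1 / 2 : ℝ)
  refine h.congr_deriv ?_
  simp only [PhiDeriv, mul_sum]
  congr 1
  exact sum_congr rfl fun j _ => by ring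

theorem sum_PhiDeriv_mul (c : Fin ℓ → Fin ℓ → ℤ) (σ v y : Fin ℓ → ℝ) :
    ∑ i, PhiDeriv c σ v i * y i
      = ∑ j, v j * (y j + Jfun (σ j) *
          ∑ i ∈ univ.filter (fun i => i < j), (c j i : ℝ) * y i) := by
  simp only [PhiDeriv, add_mul, sum_add_distrib, sum_mul, mul_add, mul_sum]
  rw [sum_sum_filter_lt_comm]
  congr 1
  exact sum_congr rfl fun j _ => sum_congr rfl fun i _ => by ring

theorem fderiv_Klam_apply (l : Fin ℓ → ℤ) (c : Fin ℓ → Fin ℓ → ℤ) (τ v : Fin ℓ → ℝ) :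
    fderiv ℝ (Klam l c) τ v = 2 * ∑ j, v j * Jact l c j τ := by
  conv_lhs => rw [pi_eq_sum_univ' v]
  simp only [map_sum, map_smul, smul_eq_mul, Jact, mul_sum]
  exact sum_congr rfl fun j _ => by ring

theorem Jact_eq (l : Fin ℓ → ℤ) (c : Fin ℓ → Fin ℓ → ℤ) (j : Fin ℓ) (τ : Fin ℓ → ℝ) :
    Jact l c j τ = Jfun (backSubst c τ j) * (l j - Lfun l c j τ) := by
  set σ := backSubst c τ
  have hγ : HasDerivAt (fun t : ℝ => σ + t • Pi.single j 1) (Pi.single j 1) 0 := by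
    simpa using ((hasDerivAt_id' (0 : ℝ)).smul_const (Pi.single j (1 : ℝ))).const_add σ
  have hK : HasFDerivAt (Klam l c) (fderiv ℝ (Klam l c) τ) τ :=
    ((contDiff_Klam l c).differentiable (by simp) τ).hasFDerivAt
  have hΦ : HasDerivAt (fun t : ℝ => Phi c (σ + t • Pi.single j 1))
      (PhiDeriv c σ (Pi.single j 1)) 0 := by
    simpa using hγ.Phi_comp c
  have hchain := hK.comp_hasDerivAt_of_eq 0 hΦ (by simp [σ, Phi_backSubst])
  have hdirect : HasDerivAt (fun t : ℝ => Klam l c (Phi c (σ + t • Pi.single j 1)))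
      (∑ i, (l i : ℝ) * (2 * Jfun (σ i) * (Pi.single j 1 : Fin ℓ → ℝ) i)) 0 := by
    simp only [Klam_eq, backSubst_Phi]
    simpa using HasDerivAt.fun_sum (u := univ) fun i _ =>
      ((hasDerivAt_Kfun _).comp 0 (hasDerivAt_pi.mp hγ i)).const_mul (l i : ℝ)
  have h := hchain.unique hdirect
  simp only [fderiv_Klam_apply, sum_PhiDeriv_mul, Pi.single_apply, ite_mul, one_mul, zero_mul,
    mul_ite, mul_zero, sum_ite_eq', mem_univ, if_true] at h
  rw [Lfun]
  linear_combination h / 2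

theorem differentiable_Jact (l : Fin ℓ → ℤ) (c : Fin ℓ → Fin ℓ → ℤ) (j : Fin ℓ) :
    Differentiable ℝ (Jact l c j) :=
  ((((contDiff_Klam l c).fderiv_right (m := 1) (by norm_cast)).differentiable
    (by simp)).clm_apply (differentiable_const _)).const_mul _

section Line

variable (l : Fin ℓ → ℤ) (c : Fin ℓ → Fin ℓ → ℤ) (x u : Fin ℓ → ℝ) (t : ℝ)

theorem hasDerivAt_line : HasDerivAt (fun t : ℝ => x + t • u) u t := by
  simpa using ((hasDerivAt_id' t).smul_const u).const_add x

theorem hasDerivAt_backSubst_line :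
    HasDerivAt (fun t : ℝ => backSubst c (x + t • u))
      (deriv (fun t : ℝ => backSubst c (x + t • u)) t) t :=
  (((contDiff_backSubst c).differentiable (by simp)).comp
    (by fun_prop : Differentiable ℝ fun t : ℝ => x + t • u) t).hasDerivAt

theorem PhiDeriv_deriv_backSubst_line :
    PhiDeriv c (backSubst c (x + t • u)) (deriv (fun t : ℝ => backSubst c (x + t • u)) t) = u :=
  ((hasDerivAt_backSubst_line c x u t).Phi_comp c).unique <| by
    simpa only [Phi_backSubst] using hasDerivAt_line x u t

theorem deriv_backSubst_line_ne_zero (hu : u ≠ 0) :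
    deriv (fun t : ℝ => backSubst c (x + t • u)) t ≠ 0 := by
  intro hv
  apply hu
  rw [← PhiDeriv_deriv_backSubst_line c x u t, hv]
  funext i
  simp [PhiDeriv]

theorem deriv_Klam_line :
    deriv (fun t : ℝ => Klam l c (x + t • u))
      = fun t => 2 * ∑ j, u j * Jact l c j (x + t • u) := by
  funext t
  rw [← fderiv_Klam_apply]
  exact (((contDiff_Klam l c).differentiable (by simp) _).hasFDerivAt.comp_hasDerivAt t
    (hasDerivAt_line x u t)).deriv

theorem iterate_deriv_two_Klam_line :
    deriv^[2] (fun t : ℝ => Klam l c (x + t • u)) t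
      = 2 * ∑ j, (l j - Lfun l c j (x + t • u))
          * (2 * Jfun (backSubst c (x + t • u) j) * (1 - Jfun (backSubst c (x + t • u) j)))
          * deriv (fun t : ℝ => backSubst c (x + t • u)) t j ^ 2 := by
  set s := fun t : ℝ => backSubst c (x + t • u)
  set v := deriv s t
  set P := fun (j : Fin ℓ) (t : ℝ) => Jact l c j (x + t • u)
  set P' := fun j => deriv (P j) t
  have hP (j : Fin ℓ) : HasDerivAt (P j) (P' j) t :=
    ((differentiable_Jact l c j).comp (by fun_prop : Differentiable ℝ fun t : ℝ => x + t • u)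
      t).hasDerivAt
  have hP' (j : Fin ℓ) : P' j = 2 * Jfun (s t j) * (1 - Jfun (s t j)) * v j
      * (l j - Lfun l c j (x + t • u))
      + Jfun (s t j) * -∑ i ∈ univ.filter (fun i => i < j), (c j i : ℝ) * P' i := by
    have hJ := (hasDerivAt_Jfun _).comp t
      (hasDerivAt_pi.mp (hasDerivAt_backSubst_line c x u t) j)
    have hM := (HasDerivAt.fun_sum (u := univ.filter (fun i => i < j)) fun i _ =>
      (hP i).const_mul (c j i : ℝ)).const_sub (l j : ℝ)
    refine (hP j).unique ((hJ.mul hM).congr_of_eventuallyEq ?_)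
    exact Filter.Eventually.of_forall fun t => Jact_eq l c j (x + t • u)
  rw [Function.iterate_succ_apply, Function.iterate_one, deriv_Klam_line]
  have hsum :=
    (HasDerivAt.fun_sum (u := univ) fun j _ => (hP j).const_mul (u j)).const_mul (2 : ℝ)
  rw [hsum.deriv]
  calc 2 * ∑ j, u j * P' j = 2 * ∑ j, PhiDeriv c (s t) v j * P' j := by
        rw [PhiDeriv_deriv_backSubst_line]
    _ = _ := by
        rw [sum_PhiDeriv_mul]
        congr 1
        exact sum_congr rfl fun j _ => by rw [hP' j]; ring

end Line

end

/-- Under the positivity condition, the Kähler potential `K_λ` is strictly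
convex on `ℝ^ℓ` (used in the proof of Theorem 7.3). -/
theorem kahler_potential_strictly_convex {ℓ : ℕ} (l : Fin ℓ → ℤ)
    (c : Fin ℓ → Fin ℓ → ℤ)
    (hpos : ∀ τ : Fin ℓ → ℝ, ∀ j : Fin ℓ, 0 < (l j : ℝ) - Lfun l c j τ) :
    StrictConvexOn ℝ Set.univ (Klam l c) := by
  refine StrictConvexOn.of_forall_line fun x u hu =>
    strictConvexOn_univ_of_deriv2_pos ((contDiff_Klam l c).continuous.comp (by fun_prop))
      fun t => ?_
  rw [iterate_deriv_two_Klam_line]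
  obtain ⟨k, hk⟩ := Function.ne_iff.mp (deriv_backSubst_line_ne_zero c x u t hu)
  have hJ' (s : ℝ) : 0 < 2 * Jfun s * (1 - Jfun s) :=
    mul_pos (mul_pos two_pos (Jfun_pos s)) (one_sub_Jfun_pos s)
  refine mul_pos two_pos (sum_pos' (fun j _ => ?_) ⟨k, mem_univ k, ?_⟩)
  · exact mul_nonneg (mul_pos (hpos _ j) (hJ' _)).le (sq_nonneg _)
  · exact mul_pos (mul_pos (hpos _ k) (hJ' _)) (pow_two_pos_of_ne_zero hk)
end
end

section
/- Assume the positivity condition: l_j − L_j(τ) > 0 for every τ ∈ ℝ^ℓ and every j. Define Ψ : [0,1]^ℓ → ℝ^ℓ recursively by Ψ(θ)_j := θ_j · ( l_j − Σ_{i<j} c_{ji} Ψ(θ)_i ). Then Ψ maps [0,1]^ℓ onto the moment polytope Δ := { x ∈ ℝ^ℓ : 0 ≤ x_j ≤ l_j − Σ_{i<j} c_{ji} x_i for all j }, and Ψ restricts to a bijection from the open cube (0,1)^ℓ onto { x ∈ ℝ^ℓ : 0 < x_j < l_j − Σ_{i<j} c_{ji} x_i for all j }. -/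
open Real Finset

noncomputable section

/-! At `τ = Φ(σ)` the action variables satisfy `J_j = 𝒥(σ_j)·(l_j − L_j)`: differentiate
`K_λ ∘ Φ = Σ_i l_i K(σ_i)` by the chain rule, `Φ⁻¹` being differentiable by the inverse function
theorem because `DΦ` is unipotent triangular. As `𝒥` maps `ℝ` onto `(0,1)`, for `θ` in the open
cube the vector `J(Φ(σ))` with `𝒥(σ_i) = θ_i` solves the triangular recursion defining `Ψ(θ)`, so
the positivity condition says that the slacks `l_j − Σ_{i<j} c_{ji} Ψ(θ)_i` are positive; by
continuity they are nonnegative on the closed cube. Then `Ψ(θ)_j = θ_j · slack_j`, inverted by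
`x ↦ x_j / slack_j(x)`. -/

open Function

theorem Function.IsFixedPt.eq_of_triangular {ι α : Type*} {r : ι → ι → Prop}
    (hr : WellFounded r) {T : (ι → α) → ι → α}
    (hT : ∀ x y i, (∀ j, r j i → x j = y j) → T x i = T y i)
    {x y : ι → α} (hx : IsFixedPt T x) (hy : IsFixedPt T y) : x = y :=
  funext fun i => hr.induction (C := fun i => x i = y i) i fun i ih => by
    rw [← hx, ← hy]
    exact hT x y i ih

theorem hasStrictDerivAt_Kfun (t : ℝ) : HasStrictDerivAt Kfun (2 * Jfun t) t := by
  have hlin : HasStrictDerivAt (fun t : ℝ => 2 * t) 2 t := by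
    simpa using (hasStrictDerivAt_id t).const_mul 2
  refine ((hlin.exp.const_add 1).log (by positivity)).congr_deriv ?_
  simp only [Jfun]
  ring

theorem differentiable_Kfun : Differentiable ℝ Kfun :=
  fun t => (hasStrictDerivAt_Kfun t).hasDerivAt.differentiableAt

theorem Jfun_eq_sigmoid (t : ℝ) : Jfun t = sigmoid (2 * t) := by
  rw [sigmoid_def, Jfun, Real.exp_neg]
  field_simp
  ring

theorem range_Jfun : Set.range Jfun = Set.Ioo 0 1 := by
  have : Jfun = sigmoid ∘ (fun t => 2 * t) := funext Jfun_eq_sigmoid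
  rw [this, Set.range_comp, (mul_left_surjective₀ two_ne_zero).range_eq, Set.image_univ,
    range_sigmoid]

section Phi

variable {ℓ : ℕ} (c : Fin ℓ → Fin ℓ → ℤ)

theorem Phi_injective : Injective (Phi c) := by
  intro σ σ' h
  let T : (Fin ℓ → ℝ) → Fin ℓ → ℝ := fun s i =>
    Phi c σ i - (1 / 2) * ∑ j ∈ univ.filter (fun j => i < j), (c j i : ℝ) * Kfun (s j)
  refine IsFixedPt.eq_of_triangular (T := T) wellFounded_gt (fun s s' i hss' => ?_) ?_ ?_
  · simp only [T]
    congr 2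
    exact sum_congr rfl fun j hj => by rw [hss' j (mem_filter.1 hj).2]
  · funext i; simp only [T, Phi]; ring
  · funext i; simp only [T]; rw [h]; simp only [Phi]; ring

theorem PhiInv_Phi (σ : Fin ℓ → ℝ) : PhiInv c (Phi c σ) = σ :=
  leftInverse_invFun (Phi_injective c) σ

def phiDeriv (σ : Fin ℓ → ℝ) : (Fin ℓ → ℝ) →L[ℝ] Fin ℓ → ℝ :=
  ContinuousLinearMap.pi fun i => ContinuousLinearMap.proj i +
    ∑ j ∈ univ.filter (fun j => i < j), ((c j i : ℝ) * Jfun (σ j)) • ContinuousLinearMap.proj j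

theorem phiDeriv_apply (σ v : Fin ℓ → ℝ) (i : Fin ℓ) :
    phiDeriv c σ v i =
      v i + ∑ j ∈ univ.filter (fun j => i < j), (c j i : ℝ) * Jfun (σ j) * v j := by
  simp [phiDeriv]

theorem phiDeriv_single (σ : Fin ℓ → ℝ) (k : Fin ℓ) :
    phiDeriv c σ (Pi.single k 1) = Pi.single k 1 +
      ∑ i ∈ univ.filter (fun i => i < k), ((c k i : ℝ) * Jfun (σ k)) • Pi.single i 1 := by
  funext i
  simp [phiDeriv_apply, Pi.single_apply, Finset.sum_apply, eq_comm]

theorem hasStrictFDerivAt_Phi (σ : Fin ℓ → ℝ) :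
    HasStrictFDerivAt (Phi c) (phiDeriv c σ) σ := by
  refine hasStrictFDerivAt_pi.2 fun i => ?_
  have hproj : ∀ j,
      HasStrictFDerivAt (fun s : Fin ℓ → ℝ => s j) (ContinuousLinearMap.proj j) σ :=
    fun j => hasStrictFDerivAt_apply (𝕜 := ℝ) (F' := fun _ : Fin ℓ => ℝ) j σ
  have hK : ∀ j, HasStrictFDerivAt (fun s : Fin ℓ → ℝ => Kfun (s j))
      ((2 * Jfun (σ j)) • ContinuousLinearMap.proj j) σ := fun j =>
    HasStrictDerivAt.comp_hasStrictFDerivAt (h₂ := Kfun) σ (hasStrictDerivAt_Kfun (σ j)) (hproj j)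
  have hsum := (HasStrictFDerivAt.fun_sum (u := univ.filter (fun j => i < j)) fun j _ =>
    (hK j).const_mul (c j i : ℝ)).const_mul (1 / 2 : ℝ)
  refine ((hproj i).add hsum).congr_fderiv ?_
  rw [smul_sum]
  congr 1
  refine sum_congr rfl fun j _ => ?_
  rw [smul_smul, smul_smul]
  congr 1
  ring

theorem phiDeriv_injective (σ : Fin ℓ → ℝ) : Injective (phiDeriv c σ) := by
  refine (injective_iff_map_eq_zero _).2 fun v hv => ?_
  let T : (Fin ℓ → ℝ) → Fin ℓ → ℝ := fun w i =>
    -∑ j ∈ univ.filter (fun j => i < j), (c j i : ℝ) * Jfun (σ j) * w j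
  refine IsFixedPt.eq_of_triangular (T := T) wellFounded_gt (fun w w' i hww' => ?_) ?_ ?_
  · simp only [T]
    congr 1
    exact sum_congr rfl fun j hj => by rw [hww' j (mem_filter.1 hj).2]
  · funext i
    have hvi := congrFun hv i
    rw [phiDeriv_apply] at hvi
    simp only [T, Pi.zero_apply] at hvi ⊢
    linarith
  · funext i; simp [T]

theorem differentiableAt_PhiInv (σ : Fin ℓ → ℝ) : DifferentiableAt ℝ (PhiInv c) (Phi c σ) := by
  let e := (LinearEquiv.ofInjectiveEndo _ (phiDeriv_injective c σ)).toContinuousLinearEquiv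
  have hΦ : HasStrictFDerivAt (Phi c) (e : (Fin ℓ → ℝ) →L[ℝ] Fin ℓ → ℝ) σ :=
    hasStrictFDerivAt_Phi c σ
  exact (hΦ.to_local_left_inverse (Filter.Eventually.of_forall (PhiInv_Phi c))).differentiableAt

end Phi

section Action

variable {ℓ : ℕ} (l : Fin ℓ → ℤ) (c : Fin ℓ → Fin ℓ → ℤ)

theorem Klam_comp_Phi : Klam l c ∘ Phi c = fun σ => ∑ i, (l i : ℝ) * Kfun (σ i) := by
  funext σ
  simp only [comp_apply, Klam, PhiInv_Phi]

theorem differentiableAt_Klam (σ : Fin ℓ → ℝ) : DifferentiableAt ℝ (Klam l c) (Phi c σ) := by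
  have hinv := differentiableAt_PhiInv c σ
  have hK : ∀ i, DifferentiableAt ℝ (fun τ => Kfun (PhiInv c τ i)) (Phi c σ) := fun i =>
    (differentiable_Kfun _).comp (Phi c σ) (differentiableAt_pi.1 hinv i)
  exact DifferentiableAt.fun_sum fun i _ => (hK i).const_mul _

theorem Jact_Phi (σ : Fin ℓ → ℝ) (k : Fin ℓ) :
    Jact l c k (Phi c σ) = Jfun (σ k) * ((l k : ℝ) - Lfun l c k (Phi c σ)) := by
  set G := fderiv ℝ (Klam l c) (Phi c σ)
  have hchain : HasFDerivAt (Klam l c ∘ Phi c) (G.comp (phiDeriv c σ)) σ :=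
    (differentiableAt_Klam l c σ).hasFDerivAt.comp σ (hasStrictFDerivAt_Phi c σ).hasFDerivAt
  have hF := HasFDerivAt.fun_sum (u := univ) fun i _ =>
    (HasDerivAt.comp_hasFDerivAt (h₂ := Kfun) σ (hasStrictDerivAt_Kfun (σ i)).hasDerivAt
      (hasFDerivAt_apply (𝕜 := ℝ) (F' := fun _ : Fin ℓ => ℝ) i σ)).const_mul (l i : ℝ)
  rw [Klam_comp_Phi] at hchain
  have hk := congrArg (fun L => L (Pi.single k 1)) (hchain.unique hF)
  simp only [ContinuousLinearMap.comp_apply, phiDeriv_single, map_add, map_sum, map_smul] at hk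
  simp only [smul_eq_mul, _root_.sum_apply, smul_apply,
    ContinuousLinearMap.proj_apply, Pi.single_apply, mul_ite, mul_one, mul_zero, sum_ite_eq',
    mem_univ, ↓reduceIte] at hk
  have hS : ∑ i ∈ univ.filter (fun i => i < k), (c k i : ℝ) * Jfun (σ k) * G (Pi.single i 1) =
      Jfun (σ k) * ∑ i ∈ univ.filter (fun i => i < k), (c k i : ℝ) * G (Pi.single i 1) := by
    rw [mul_sum]; exact sum_congr rfl fun _ _ => by ring
  have hL : Lfun l c k (Phi c σ) =
      1 / 2 * ∑ i ∈ univ.filter (fun i => i < k), (c k i : ℝ) * G (Pi.single i 1) := by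
    rw [Lfun, mul_sum]; exact sum_congr rfl fun _ _ => by simp only [Jact, G]; ring
  rw [hS] at hk
  rw [hL, Jact]
  linear_combination (1 / 2 : ℝ) * hk

end Action

section Cube

variable {ℓ : ℕ} {l : Fin ℓ → ℤ} {c : Fin ℓ → Fin ℓ → ℤ}

def slack (l : Fin ℓ → ℤ) (c : Fin ℓ → Fin ℓ → ℤ) (x : Fin ℓ → ℝ) (j : Fin ℓ) : ℝ :=
  (l j : ℝ) - ∑ i ∈ univ.filter (fun i => i < j), (c j i : ℝ) * x i

/-- `Ψ(θ)` is the fixed point of `cubeMap l c θ`. -/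
def cubeMap (l : Fin ℓ → ℤ) (c : Fin ℓ → Fin ℓ → ℤ) (θ x : Fin ℓ → ℝ) : Fin ℓ → ℝ :=
  fun j => θ j * slack l c x j

theorem slack_congr {x y : Fin ℓ → ℝ} {j : Fin ℓ} (h : ∀ i, i < j → x i = y i) :
    slack l c x j = slack l c y j := by
  simp only [slack]
  congr 1
  exact sum_congr rfl fun i hi => by rw [h i (mem_filter.1 hi).2]

theorem continuous_slack (l : Fin ℓ → ℤ) (c : Fin ℓ → Fin ℓ → ℤ) (j : Fin ℓ) :
    Continuous fun x => slack l c x j := by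
  unfold slack
  fun_prop

theorem eq_of_isFixedPt_cubeMap {θ x y : Fin ℓ → ℝ} (hx : IsFixedPt (cubeMap l c θ) x)
    (hy : IsFixedPt (cubeMap l c θ) y) : x = y :=
  hx.eq_of_triangular wellFounded_lt (fun _ _ _ h => by simp only [cubeMap, slack_congr h]) hy

theorem continuous_of_isFixedPt_cubeMap {Ψ : (Fin ℓ → ℝ) → Fin ℓ → ℝ}
    (hΨ : ∀ θ, IsFixedPt (cubeMap l c θ) (Ψ θ)) : Continuous Ψ := by
  refine continuous_pi fun j => ?_
  induction j using WellFoundedLT.induction with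
  | _ j ih =>
    have hslack : Continuous fun θ => slack l c (Ψ θ) j :=
      continuous_const.sub <| continuous_finsetSum _ fun i hi =>
        continuous_const.mul (ih i (mem_filter.1 hi).2)
    have : (fun θ => Ψ θ j) = fun θ => θ j * slack l c (Ψ θ) j :=
      funext fun θ => (congrFun (hΨ θ) j).symm
    rw [this]
    exact (continuous_apply j).mul hslack

theorem slack_pos_of_isFixedPt
    (hpos : ∀ τ : Fin ℓ → ℝ, ∀ j : Fin ℓ, 0 < (l j : ℝ) - Lfun l c j τ)
    {θ x : Fin ℓ → ℝ} (hθ : ∀ i, θ i ∈ Set.Ioo (0 : ℝ) 1) (hx : IsFixedPt (cubeMap l c θ) x)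
    (j : Fin ℓ) : 0 < slack l c x j := by
  choose σ hσ using fun i => (range_Jfun ▸ hθ i : θ i ∈ Set.range Jfun)
  have hJ : IsFixedPt (cubeMap l c θ) fun i => Jact l c i (Phi c σ) :=
    funext fun k => by rw [cubeMap, ← hσ k, Jact_Phi]; rfl
  rw [eq_of_isFixedPt_cubeMap hx hJ]
  exact hpos (Phi c σ) j

theorem slack_nonneg_of_isFixedPt
    (hpos : ∀ τ : Fin ℓ → ℝ, ∀ j : Fin ℓ, 0 < (l j : ℝ) - Lfun l c j τ)
    {Ψ : (Fin ℓ → ℝ) → Fin ℓ → ℝ} (hΨ : ∀ θ, IsFixedPt (cubeMap l c θ) (Ψ θ))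
    {θ : Fin ℓ → ℝ} (hθ : ∀ i, θ i ∈ Set.Icc (0 : ℝ) 1) (j : Fin ℓ) : 0 ≤ slack l c (Ψ θ) j := by
  have hclosed : IsClosed {θ | 0 ≤ slack l c (Ψ θ) j} :=
    isClosed_le continuous_const
      ((continuous_slack l c j).comp (continuous_of_isFixedPt_cubeMap hΨ))
  have hθ' : θ ∈ closure (Set.univ.pi fun _ => Set.Ioo (0 : ℝ) 1) := by
    rw [closure_pi_set, closure_Ioo zero_ne_one]
    exact fun i _ => hθ i
  refine hclosed.closure_subset_iff.2 (fun θ hθ => ?_) hθ'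
  exact (slack_pos_of_isFixedPt hpos (fun i => hθ i (Set.mem_univ i)) (hΨ θ) j).le

/-- Inverse of `Ψ` on the polytope; where the slack vanishes, `x_j = 0` and `0 / 0 = 0`. -/
def cubeCoord (l : Fin ℓ → ℤ) (c : Fin ℓ → Fin ℓ → ℤ) (x : Fin ℓ → ℝ) : Fin ℓ → ℝ :=
  fun j => x j / slack l c x j

theorem isFixedPt_cubeMap_cubeCoord {x : Fin ℓ → ℝ}
    (hx : ∀ j, 0 ≤ x j ∧ x j ≤ slack l c x j) :
    IsFixedPt (cubeMap l c (cubeCoord l c x)) x :=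
  funext fun j => div_mul_cancel_of_imp fun h => le_antisymm (h ▸ (hx j).2) (hx j).1

variable (hpos : ∀ τ : Fin ℓ → ℝ, ∀ j : Fin ℓ, 0 < (l j : ℝ) - Lfun l c j τ)
  {Ψ : (Fin ℓ → ℝ) → Fin ℓ → ℝ} (hΨ : ∀ θ, IsFixedPt (cubeMap l c θ) (Ψ θ))
include hpos hΨ

theorem image_Icc_cube_eq_polytope :
    Ψ '' {θ | ∀ i, θ i ∈ Set.Icc (0 : ℝ) 1} = {x | ∀ j, 0 ≤ x j ∧ x j ≤ slack l c x j} := by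
  ext x
  constructor
  · rintro ⟨θ, hθ, rfl⟩ j
    have hs := slack_nonneg_of_isFixedPt hpos hΨ hθ j
    rw [← congrFun (hΨ θ) j]
    exact ⟨mul_nonneg (hθ j).1 hs, mul_le_of_le_one_left hs (hθ j).2⟩
  · intro hx
    have hs : ∀ j, 0 ≤ slack l c x j := fun j => (hx j).1.trans (hx j).2
    refine ⟨cubeCoord l c x,
      fun j => ⟨div_nonneg (hx j).1 (hs j), div_le_one_of_le₀ (hx j).2 (hs j)⟩,
      eq_of_isFixedPt_cubeMap (hΨ _) (isFixedPt_cubeMap_cubeCoord hx)⟩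

theorem bijOn_Ioo_cube_interior :
    Set.BijOn Ψ {θ | ∀ i, θ i ∈ Set.Ioo (0 : ℝ) 1} {x | ∀ j, 0 < x j ∧ x j < slack l c x j} := by
  have hs : ∀ θ, (∀ i, θ i ∈ Set.Ioo (0 : ℝ) 1) → ∀ j, 0 < slack l c (Ψ θ) j :=
    fun θ hθ => slack_pos_of_isFixedPt hpos hθ (hΨ θ)
  refine ⟨fun θ hθ j => ?_, fun θ hθ θ' hθ' h => funext fun j => ?_, fun x hx => ?_⟩
  · rw [← congrFun (hΨ θ) j]
    exact ⟨mul_pos (hθ j).1 (hs θ hθ j), mul_lt_of_lt_one_left (hs θ hθ j) (hθ j).2⟩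
  · have hj := congrFun (hΨ θ) j
    rw [h, ← congrFun (hΨ θ') j] at hj
    exact mul_right_cancel₀ (hs θ' hθ' j).ne' hj
  · have hx' : ∀ j, 0 < slack l c x j := fun j => (hx j).1.trans (hx j).2
    refine ⟨cubeCoord l c x,
      fun j => ⟨div_pos (hx j).1 (hx' j), (div_lt_one (hx' j)).2 (hx j).2⟩,
      eq_of_isFixedPt_cubeMap (hΨ _)
        (isFixedPt_cubeMap_cubeCoord fun j => ⟨(hx j).1.le, (hx j).2.le⟩)⟩

end Cube

/-- Theorem 6.1 ('cubic polytope'): under the positivity condition, the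
recursively defined map `Ψ(θ)_j = θ_j·(l_j − Σ_{i<j} c_{ji} Ψ(θ)_i)` maps the
cube `[0,1]^ℓ` onto the moment polytope `Δ` and restricts to a bijection from
the open cube `(0,1)^ℓ` onto the interior inequalities
`{x : 0 < x_j < l_j − Σ_{i<j} c_{ji} x_i}`. -/
theorem cube_parametrization_of_polytope {ℓ : ℕ} (l : Fin ℓ → ℤ)
    (c : Fin ℓ → Fin ℓ → ℤ)
    (hpos : ∀ τ : Fin ℓ → ℝ, ∀ j : Fin ℓ, 0 < (l j : ℝ) - Lfun l c j τ)
    (Ψ : (Fin ℓ → ℝ) → Fin ℓ → ℝ)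
    (hΨ : ∀ θ : Fin ℓ → ℝ, ∀ j : Fin ℓ, Ψ θ j = θ j * ((l j : ℝ) -
      ∑ i ∈ Finset.univ.filter (fun i => i < j), (c j i : ℝ) * Ψ θ i)) :
    Ψ '' {θ : Fin ℓ → ℝ | ∀ i, θ i ∈ Set.Icc (0 : ℝ) 1} =
      {x : Fin ℓ → ℝ | ∀ j : Fin ℓ, 0 ≤ x j ∧ x j ≤ (l j : ℝ) -
        ∑ i ∈ Finset.univ.filter (fun i => i < j), (c j i : ℝ) * x i} ∧
    Set.BijOn Ψ {θ : Fin ℓ → ℝ | ∀ i, θ i ∈ Set.Ioo (0 : ℝ) 1}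
      {x : Fin ℓ → ℝ | ∀ j : Fin ℓ, 0 < x j ∧ x j < (l j : ℝ) -
        ∑ i ∈ Finset.univ.filter (fun i => i < j), (c j i : ℝ) * x i} := by
  have hfix : ∀ θ, IsFixedPt (cubeMap l c θ) (Ψ θ) := fun θ => funext fun j => (hΨ θ j).symm
  exact ⟨image_Icc_cube_eq_polytope hpos hfix, bijOn_Ioo_cube_interior hpos hfix⟩
end
end
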